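/- Bernstein inequality (ball case, k = 1): there is a constant C > 0 such that for every λ > 0 and every Schwartz function f : ℝ → ℂ with Fourier transform supported in {ξ : |ξ| ≤ (4/3)λ}, one has ‖f'‖_{L^∞} ≤ C λ ‖f‖_{L^∞}. -/

import Mathlib

/-- Fourier transform with the convention ℱf(ξ) = ∫ e^{-ixξ} f(x) dx. -/
noncomputable def ft (f : ℝ → ℂ) (ξ : ℝ) : ℂ :=
  ∫ x : ℝ, Complex.exp (-(Complex.I * x * ξ)) * f x

/-!
The derivative is a Fourier multiplier with symbol `2πiξ`. When `𝓕 f` lives in `|ξ| ≤ R`, this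
symbol may be replaced by the compactly supported smooth symbol `m_R(ξ) = 2πiξ ψ(ξ / R)`, with `ψ`
a bump equal to `1` on `[-1, 1]`, so `f' = f ⋆ 𝓕⁻ m_R` and `‖f'‖_∞ ≤ ‖𝓕⁻ m_R‖_{L¹} ‖f‖_∞`.
Since `m_R(ξ) = R m_1(ξ / R)` and dilations preserve the `L¹` norm of `𝓕⁻`, the kernel norm is
`R ‖𝓕⁻ m_1‖_{L¹}`. In Mathlib's normalization, `supp ft f ⊆ [-4λ/3, 4λ/3]` gives
`supp 𝓕 f ⊆ [-2λ/(3π), 2λ/(3π)] ⊆ [-λ, λ]`.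
-/

open MeasureTheory FourierTransform SchwartzMap Real Complex
open scoped Convolution ContDiff

namespace Real

variable {E : Type*} [NormedAddCommGroup E] [NormedSpace ℂ E]

theorem fourierInv_const_smul (c : ℂ) (φ : ℝ → E) (x : ℝ) :
    𝓕⁻ (fun ξ ↦ c • φ ξ) x = c • 𝓕⁻ φ x := by
  simp only [fourierInv_eq, ← integral_smul, smul_comm c]

theorem fourierInv_comp_div (φ : ℝ → E) {a : ℝ} (ha : 0 < a) (x : ℝ) :
    𝓕⁻ (fun ξ ↦ φ (ξ / a)) x = a • 𝓕⁻ φ (a * x) := by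
  have hcov := Measure.integral_comp_div (fun η : ℝ ↦ 𝐞 (a * x * η) • φ η) a
  simp only [fourierInv_eq, RCLike.inner_apply, conj_trivial, abs_of_pos ha] at hcov ⊢
  rw [← hcov]
  congr 1 with ξ
  rw [mul_div_assoc', mul_assoc, mul_div_cancel_left₀ _ ha.ne']

theorem integral_norm_fourierInv_comp_div (φ : ℝ → E) {a : ℝ} (ha : 0 < a) :
    ∫ x, ‖𝓕⁻ (fun ξ ↦ φ (ξ / a)) x‖ = ∫ x, ‖𝓕⁻ φ x‖ := by
  simp_rw [fourierInv_comp_div φ ha, norm_smul, integral_const_mul,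
    Measure.integral_comp_mul_left (fun y ↦ ‖𝓕⁻ φ y‖), Real.norm_of_nonneg ha.le,
    abs_of_pos (inv_pos.2 ha), smul_eq_mul, ← mul_assoc, mul_inv_cancel₀ ha.ne', one_mul]

end Real

theorem norm_convolution_mul_le_iSup_mul_integral {𝕜 G : Type*} [RCLike 𝕜] [AddGroup G]
    [MeasurableSpace G] [MeasurableAdd G] [MeasurableNeg G] {μ : Measure G}
    [μ.IsAddLeftInvariant] [μ.IsNegInvariant] {f g : G → 𝕜}
    (hf : BddAbove (Set.range fun y ↦ ‖f y‖)) (hg : Integrable g μ) (x : G) :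
    ‖(f ⋆[ContinuousLinearMap.mul 𝕜 𝕜, μ] g) x‖ ≤ (⨆ y, ‖f y‖) * ∫ y, ‖g y‖ ∂μ := by
  rw [convolution_def, ← integral_sub_left_eq_self (fun y ↦ ‖g y‖) μ x, ← integral_const_mul]
  refine norm_integral_le_of_norm_le ((hg.norm.comp_sub_left x).const_mul _) ?_
  filter_upwards with t
  rw [ContinuousLinearMap.mul_apply', norm_mul]
  exact mul_le_mul_of_nonneg_right (le_ciSup hf t) (norm_nonneg _)

namespace SchwartzMap

theorem bddAbove_range_norm {E F : Type*} [NormedAddCommGroup E] [NormedSpace ℝ E]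
    [NormedAddCommGroup F] [NormedSpace ℝ F] (f : 𝓢(E, F)) :
    BddAbove (Set.range fun x ↦ ‖f x‖) :=
  ⟨SchwartzMap.seminorm ℝ 0 0 f, Set.forall_mem_range.2 (norm_le_seminorm ℝ f)⟩

theorem deriv_eq_convolution_fourierInv (f m : 𝓢(ℝ, ℂ))
    (hm : Set.EqOn m (fun ξ ↦ 2 * π * I * ξ) (Function.support (𝓕 (f : ℝ → ℂ)))) :
    deriv f = f ⋆[ContinuousLinearMap.mul ℂ ℂ] (𝓕⁻ m : 𝓢(ℝ, ℂ)) := by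
  have hderiv : ⇑(derivCLM ℂ ℂ f) = deriv f := funext (derivCLM_apply ℂ f)
  have hfourier :
      𝓕 (derivCLM ℂ ℂ f) = 𝓕 (convolution (ContinuousLinearMap.mul ℂ ℂ) f (𝓕⁻ m)) := by
    ext ξ
    rw [fourier_convolution, pairing_apply_apply, fourier_fourierInv_eq, fourier_coe, fourier_coe,
      hderiv, fourier_deriv f.integrable f.differentiable (hderiv ▸ (derivCLM ℂ ℂ f).integrable),
      ContinuousLinearMap.mul_apply']
    by_cases hξ : 𝓕 (f : ℝ → ℂ) ξ = 0
    · simp [hξ]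
    · rw [hm hξ]
      exact mul_comm _ _
  funext x
  rw [← derivCLM_apply ℂ, ← convolution_apply, (fourierEquiv ℂ 𝓢(ℝ, ℂ)).injective hfourier]

end SchwartzMap

noncomputable def unitCutoff : ContDiffBump (0 : ℝ) := ⟨1, 2, one_pos, one_lt_two⟩

noncomputable def derivSymbol (R ξ : ℝ) : ℂ := 2 * π * I * ξ * unitCutoff (ξ / R)

theorem derivSymbol_eq_of_mem_closedBall {R ξ : ℝ} (hR : 0 < R)
    (hξ : ξ ∈ Metric.closedBall 0 R) : derivSymbol R ξ = 2 * π * I * ξ := by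
  have hξR : ξ / R ∈ Metric.closedBall 0 unitCutoff.rIn := by
    rw [mem_closedBall_zero_iff] at hξ ⊢
    rw [norm_div, Real.norm_of_nonneg hR.le]
    exact (div_le_one hR).2 hξ
  rw [derivSymbol, unitCutoff.one_of_mem_closedBall hξR, ofReal_one, mul_one]

theorem derivSymbol_eq_smul_comp_div {R : ℝ} (hR : R ≠ 0) :
    derivSymbol R = fun ξ ↦ (R : ℂ) • derivSymbol 1 (ξ / R) := by
  have hR' : (R : ℂ) ≠ 0 := ofReal_ne_zero.2 hR
  ext ξ
  simp only [derivSymbol, div_one, smul_eq_mul, ofReal_div]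
  field_simp

theorem contDiff_derivSymbol (R : ℝ) : ContDiff ℝ ∞ (derivSymbol R) := by
  have hcutoff : ContDiff ℝ ∞ fun ξ : ℝ ↦ unitCutoff (ξ / R) :=
    unitCutoff.contDiff.comp (contDiff_id.div_const R)
  exact (contDiff_const.mul ofRealCLM.contDiff).mul (ofRealCLM.contDiff.comp hcutoff)

theorem hasCompactSupport_derivSymbol {R : ℝ} (hR : R ≠ 0) :
    HasCompactSupport (derivSymbol R) := by
  have : HasCompactSupport fun ξ : ℝ ↦ unitCutoff (R⁻¹ • ξ) :=
    unitCutoff.hasCompactSupport.comp_smul (inv_ne_zero hR)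
  simp only [smul_eq_mul, ← div_eq_inv_mul] at this
  exact (this.comp_left ofReal_zero).mul_left

noncomputable def derivSymbolSchwartz {R : ℝ} (hR : R ≠ 0) : 𝓢(ℝ, ℂ) :=
  (hasCompactSupport_derivSymbol hR).toSchwartzMap (contDiff_derivSymbol R)

theorem integral_norm_fourierInv_derivSymbol {R : ℝ} (hR : 0 < R) :
    ∫ x, ‖𝓕⁻ (derivSymbol R) x‖ = R * ∫ x, ‖𝓕⁻ (derivSymbol 1) x‖ := by
  rw [derivSymbol_eq_smul_comp_div hR.ne']
  simp_rw [Real.fourierInv_const_smul, norm_smul, integral_const_mul,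
    Real.integral_norm_fourierInv_comp_div _ hR, norm_real, Real.norm_of_nonneg hR.le]

theorem SchwartzMap.norm_deriv_le_of_support_fourier_subset (f : 𝓢(ℝ, ℂ)) {R : ℝ} (hR : 0 < R)
    (hf : Function.support (𝓕 (f : ℝ → ℂ)) ⊆ Metric.closedBall 0 R) (x : ℝ) :
    ‖deriv f x‖ ≤ (∫ y, ‖𝓕⁻ (derivSymbol 1) y‖) * R * ⨆ y, ‖f y‖ := by
  set m := derivSymbolSchwartz hR.ne'
  have hm : Set.EqOn m (fun ξ ↦ 2 * π * I * ξ) (Function.support (𝓕 (f : ℝ → ℂ))) :=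
    fun ξ hξ ↦ derivSymbol_eq_of_mem_closedBall hR (hf hξ)
  calc ‖deriv f x‖ ≤ (⨆ y, ‖f y‖) * ∫ y, ‖(𝓕⁻ m : 𝓢(ℝ, ℂ)) y‖ := by
        rw [f.deriv_eq_convolution_fourierInv m hm]
        exact norm_convolution_mul_le_iSup_mul_integral f.bddAbove_range_norm (𝓕⁻ m).integrable x
    _ = (∫ y, ‖𝓕⁻ (derivSymbol 1) y‖) * R * ⨆ y, ‖f y‖ := by
        rw [fourierInv_coe, show ⇑m = derivSymbol R from rfl,
          integral_norm_fourierInv_derivSymbol hR]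
        ring

theorem fourier_eq_ft (f : ℝ → ℂ) (w : ℝ) : 𝓕 f w = ft f (2 * π * w) := by
  rw [fourier_real_eq_integral_exp_smul, ft]
  congr 1 with x
  rw [smul_eq_mul]
  congr 2
  push_cast
  ring

theorem support_fourier_subset_closedBall_of_support_ft {f : ℝ → ℂ} {lam : ℝ} (hlam : 0 < lam)
    (hf : Function.support (ft f) ⊆ {ξ : ℝ | |ξ| ≤ (4 / 3) * lam}) :
    Function.support (𝓕 f) ⊆ Metric.closedBall 0 lam := by
  intro w hw
  rw [Function.mem_support, fourier_eq_ft] at hw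
  have h : |2 * π * w| ≤ 4 / 3 * lam := hf hw
  rw [abs_mul, abs_of_pos (by positivity : (0 : ℝ) < 2 * π)] at h
  rw [mem_closedBall_zero_iff, Real.norm_eq_abs]
  nlinarith [pi_gt_three, abs_nonneg w]

theorem stmt8 :
    ∃ C : ℝ, 0 < C ∧ ∀ (lam : ℝ), 0 < lam → ∀ f : SchwartzMap ℝ ℂ,
      Function.support (ft f) ⊆ {ξ : ℝ | |ξ| ≤ (4/3) * lam} →
      ∀ x : ℝ, ‖deriv (⇑f) x‖ ≤ C * lam * ⨆ y : ℝ, ‖f y‖ := by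
  set A := ∫ y, ‖𝓕⁻ (derivSymbol 1) y‖
  have hA : 0 ≤ A := integral_nonneg fun _ ↦ norm_nonneg _
  refine ⟨A + 1, by positivity, fun lam hlam f hsupp x ↦ ?_⟩
  have hS : 0 ≤ ⨆ y, ‖f y‖ := Real.iSup_nonneg fun _ ↦ norm_nonneg _
  calc ‖deriv f x‖ ≤ A * lam * ⨆ y, ‖f y‖ :=
        f.norm_deriv_le_of_support_fourier_subset hlam
          (support_fourier_subset_closedBall_of_support_ft hlam hsupp) x
    _ ≤ (A + 1) * lam * ⨆ y, ‖f y‖ := by gcongr; linarith
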